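/- arXiv:2003.09667 — 7 statements merged into one kernel-verified Lean document; each statement's English description precedes it below -/
import Mathlib

section
/- Let F be a CNF formula over a set X of variables (all variables quantified, i.e., the set Y of free variables is empty), and let C ∈ F be a clause blocked in F at a variable w with respect to the empty set. Then F and F \ {C} are equisatisfiable (F is satisfiable if and only if F \ {C} is satisfiable). -/
open scoped Classical

noncomputable section

/-- A clause: a finite set of literals `(variable, polarity)`. -/
abbrev Clause (V : Type) : Type := Finset (V × Bool)

/-- A CNF formula: a finite set of clauses. -/
abbrev CNF (V : Type) : Type := Finset (Finset (V × Bool))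

/-- A full assignment `α` satisfies a clause if it satisfies some literal of it. -/
def satClause {V : Type} (α : V → Bool) (C : Clause V) : Prop := ∃ l ∈ C, α l.1 = l.2

/-- A full assignment satisfies a formula if it satisfies every clause of it. -/
def satCNF {V : Type} (α : V → Bool) (F : CNF V) : Prop := ∀ C ∈ F, satClause α C

/-- A formula is satisfiable if some full assignment satisfies it. -/
def satisfiable {V : Type} (F : CNF V) : Prop := ∃ α : V → Bool, satCNF α F

/-- A partial assignment (`none` = unassigned) satisfies a clause if it satisfies
some literal of it. -/
def pSatClause {V : Type} (q : V → Option Bool) (C : Clause V) : Prop :=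
  ∃ l ∈ C, q l.1 = some l.2

/-- Cofactor of a clause under a partial assignment: delete the falsified literals. -/
def cofClause {V : Type} (q : V → Option Bool) (C : Clause V) : Clause V :=
  C.filter fun l => q l.1 ≠ some (!l.2)

/-- Cofactor of a formula under a partial assignment: remove the satisfied clauses and
delete the falsified literals from the remaining clauses. -/
def cofCNF {V : Type} (q : V → Option Bool) (F : CNF V) : CNF V :=
  (F.filter fun C => ¬ pSatClause q C).image (cofClause q)

/-- The partial assignment induced by a full assignment `y` on the set `Y`. -/
def restrict {V : Type} (Y : Set V) (y : V → Bool) : V → Option Bool :=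
  fun v => if v ∈ Y then some (y v) else none

/-- `F` es-implies `G` with respect to `Y`: for every full assignment `y` to `Y`,
`(F ∧ G)|_y` and `F|_y` are equisatisfiable. -/
def esImplies {V : Type} (Y : Set V) (F G : CNF V) : Prop :=
  ∀ y : V → Bool,
    satisfiable (cofCNF (restrict Y y) (F ∪ G)) ↔ satisfiable (cofCNF (restrict Y y) F)

/-- Two clauses are resolvable on `w`: they have opposite literals of `w` and
opposite literals of no other variable. -/
def resolvable {V : Type} (w : V) (C1 C2 : Clause V) : Prop :=
  (∃ b : Bool, (w, b) ∈ C1 ∧ (w, !b) ∈ C2) ∧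
  ∀ (v : V) (b : Bool), v ≠ w → ¬ ((v, b) ∈ C1 ∧ (v, !b) ∈ C2)

/-- The partial assignment mapping `w` to `b` and leaving everything else unassigned. -/
def singleAsn {V : Type} (w : V) (b : Bool) : V → Option Bool :=
  fun v => if v = w then some b else none

/-- `C ∈ F` containing the literal `(w, b)` is blocked in `F` at `w` with respect to `Y`:
letting `G` be the set of clauses of `F` resolvable with `C` on `w`, the formula
`(F \ G)|_{w:=b}` es-implies `G|_{w:=b}` with respect to `Y`. -/
def blocked {V : Type} (Y : Set V) (F : CNF V) (C : Clause V) (w : V) (b : Bool) : Prop :=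
  C ∈ F ∧ (w, b) ∈ C ∧
  esImplies Y
    (cofCNF (singleAsn w b) (F \ F.filter fun D => resolvable w C D))
    (cofCNF (singleAsn w b) (F.filter fun D => resolvable w C D))

private lemma cofCNF_union {V : Type} (q : V → Option Bool) (A B : CNF V) :
    cofCNF q (A ∪ B) = cofCNF q A ∪ cofCNF q B := by
  simp [cofCNF, Finset.filter_union, Finset.image_union]

private lemma cofCNF_restrict_empty {V : Type} (y : V → Bool) (H : CNF V) :
    cofCNF (restrict (∅ : Set V) y) H = H := by
  have hq : ∀ v, restrict (∅ : Set V) y v = none := by intro v; simp [restrict]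
  have h2 : ∀ D : Clause V, ¬ pSatClause (restrict (∅ : Set V) y) D := by
    rintro D ⟨l, _, hl⟩; simp [hq] at hl
  unfold cofCNF
  rw [Finset.filter_true_of_mem (fun D _ => h2 D)]
  rw [show H.image (cofClause (restrict (∅ : Set V) y)) = H.image id from
    Finset.image_congr (fun D _ => by
      unfold cofClause; exact Finset.filter_true_of_mem (fun l _ => by simp [hq]))]
  exact Finset.image_id

private lemma cof_single_sat {V : Type} (w : V) (b : Bool) (H : CNF V) :
    satisfiable (cofCNF (singleAsn w b) H) ↔ ∃ α : V → Bool, α w = b ∧ satCNF α H := by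
  constructor
  · rintro ⟨α, hα⟩
    refine ⟨fun v => if v = w then b else α v, by simp, ?_⟩
    intro D hD
    by_cases hP : pSatClause (singleAsn w b) D
    · obtain ⟨l, hlD, hl⟩ := hP
      have hlw : l.1 = w ∧ l.2 = b := by
        by_cases h : l.1 = w <;> simp [singleAsn, h] at hl
        exact ⟨h, hl.symm⟩
      exact ⟨l, hlD, by simp [hlw.1, hlw.2]⟩
    · have hmem : cofClause (singleAsn w b) D ∈ cofCNF (singleAsn w b) H := by
        unfold cofCNF
        exact Finset.mem_image_of_mem _ (Finset.mem_filter.mpr ⟨hD, hP⟩)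
      obtain ⟨⟨v, c⟩, hlD, hl⟩ := hα _ hmem
      obtain ⟨hlD', hq⟩ := Finset.mem_filter.mp hlD
      by_cases h : v = w
      · have : c = b := by
          simp only [singleAsn, h, if_pos] at hq
          cases c <;> cases b <;> simp_all
        exact ⟨(v, c), hlD', by simp [h, this]⟩
      · exact ⟨(v, c), hlD', by simp [h, hl]⟩
  · rintro ⟨α, hαw, hα⟩
    refine ⟨α, ?_⟩
    intro D' hD'
    unfold cofCNF at hD'
    obtain ⟨D, hD, rfl⟩ := Finset.mem_image.mp hD'
    obtain ⟨hDH, _⟩ := Finset.mem_filter.mp hD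
    obtain ⟨l, hlD, hl⟩ := hα D hDH
    refine ⟨l, Finset.mem_filter.mpr ⟨hlD, ?_⟩, hl⟩
    by_cases h : l.1 = w
    · have hl2 : l.2 = b := by rw [← hl, h, hαw]
      simp [singleAsn, h, hl2]
    · simp [singleAsn, h]

/-- If, with all variables quantified (the free set `Y` is empty), a clause
`C ∈ F` is blocked in `F` at a variable `w` with respect to the empty set, then `F` and
`F \ {C}` are equisatisfiable. -/
theorem stmt_0 (V : Type) (F : CNF V) (C : Clause V) (w : V) (b : Bool)
    (hC : C ∈ F) (hblk : blocked (∅ : Set V) F C w b) :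
    satisfiable F ↔ satisfiable (F.erase C) := by
  obtain ⟨-, hwb, hes⟩ := hblk
  set G := F.filter fun D => resolvable w C D with hG
  set sb := singleAsn w b with hsb
  have hGF : G ⊆ F := Finset.filter_subset _ _
  have hsplit : (F \ G) ∪ G = F := Finset.sdiff_union_of_subset hGF
  have hkey : satisfiable (cofCNF sb F) ↔ satisfiable (cofCNF sb (F \ G)) := by
    have h := hes (fun _ => false)
    rw [cofCNF_restrict_empty, cofCNF_restrict_empty, ← cofCNF_union, hsplit] at h
    exact h
  constructor
  · rintro ⟨α, hα⟩
    exact ⟨α, fun D hD => hα D (Finset.mem_of_mem_erase hD)⟩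
  · rintro ⟨α, hα⟩
    by_cases hαC : satClause α C
    · refine ⟨α, fun D hD => ?_⟩
      by_cases h : D = C
      · exact h ▸ hαC
      · exact hα D (Finset.mem_erase.mpr ⟨h, hD⟩)
    · have hαw : α w = !b := by
        have : α w ≠ b := fun h => hαC ⟨(w, b), hwb, h⟩
        cases h : α w <;> cases b <;> simp_all
      have hsat : satisfiable (cofCNF sb (F \ G)) := by
        rw [hsb, cof_single_sat]
        refine ⟨fun v => if v = w then b else α v, by simp, ?_⟩
        intro D hD
        obtain ⟨hDF, hDG⟩ := Finset.mem_sdiff.mp hD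
        by_cases hDC : D = C
        · exact ⟨(w, b), hDC ▸ hwb, by simp⟩
        · obtain ⟨l, hlD, hl⟩ := hα D (Finset.mem_erase.mpr ⟨hDC, hDF⟩)
          by_cases h : l.1 = w
          · -- l = (w, !b) ∈ D, so first resolvability condition holds; second must fail
            have hl2 : l.2 = !b := by rw [← hl, h, hαw]
            have hres1 : ∃ b' : Bool, (w, b') ∈ C ∧ (w, !b') ∈ D := by
              refine ⟨b, hwb, ?_⟩
              have : l = (w, !b) := Prod.ext h hl2
              exact this ▸ hlD
            have hnres : ¬ resolvable w C D := fun hr =>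
              hDG (Finset.mem_filter.mpr ⟨hDF, hr⟩)
            have : ¬ ∀ (v : V) (b' : Bool), v ≠ w → ¬ ((v, b') ∈ C ∧ (v, !b') ∈ D) := by
              intro hall; exact hnres ⟨hres1, hall⟩
            push_neg at this
            obtain ⟨v, b', hvw, hvC, hvD⟩ := this
            have hαv : α v = !b' := by
              have : α v ≠ b' := fun h => hαC ⟨(v, b'), hvC, h⟩
              cases h : α v <;> cases b' <;> simp_all
            exact ⟨(v, !b'), hvD, by simp [hvw, hαv]⟩
          · exact ⟨l, hlD, by simp [h, hl]⟩
      have : satisfiable (cofCNF sb F) := hkey.mpr hsat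
      rw [hsb, cof_single_sat] at this
      obtain ⟨β, _, hβ⟩ := this
      exact ⟨β, hβ⟩
end
end

section
/- Given a quantified formula ∃X[F(X,Y)], let C_trg ∈ F. Let q be an assignment to a subset of X ∪ Y that does not satisfy any literal of C_trg. Let w ∈ X be a variable not assigned by q such that the cofactor (C_trg)|_q is blocked in F|_q at w with respect to Y, and let l(w) be the literal of w present in C_trg. Let K' be the clause consisting of, for every variable v assigned by q, the literal of v falsified by q (the longest clause falsified by q). Let K'' be a clause consisting of l(w) together with a subset of the literals of C_trg, chosen so that every clause of F|_q that is unresolvable with (C_trg)|_q on w is also unresolvable with (K'')|_q. Let K_bct = K' ∨ K'' (the union of the two clauses). Then: (1) every full assignment satisfying (K_bct)|_q satisfies (C_trg)|_q, and (2) F \ {C_trg} es-implies K_bct with respect to Y. -/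
open scoped Classical

noncomputable section

def compatible {V : Type} (q : V → Option Bool) (α : V → Bool) : Prop :=
  ∀ v c, q v = some c → α v = c

def ovr {V : Type} (q : V → Option Bool) (α : V → Bool) : V → Bool :=
  fun v => (q v).getD (α v)

lemma compatible_ovr {V : Type} (q : V → Option Bool) (α : V → Bool) :
    compatible q (ovr q α) := by
  intro v c h; simp [ovr, h]

lemma satClause_cof {V : Type} {q : V → Option Bool} {α : V → Bool} {C : Clause V}
    (hc : compatible q α) (h : satClause α C) : satClause α (cofClause q C) := by
  obtain ⟨l, hl, hs⟩ := h
  refine ⟨l, Finset.mem_filter.2 ⟨hl, ?_⟩, hs⟩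
  intro hqv
  have := hc l.1 (!l.2) hqv
  rw [hs] at this
  simp at this

lemma satClause_of_cof {V : Type} {q : V → Option Bool} {α : V → Bool} {C : Clause V}
    (h : satClause α (cofClause q C)) : satClause α C := by
  obtain ⟨l, hl, hs⟩ := h
  exact ⟨l, (Finset.mem_filter.1 hl).1, hs⟩

lemma satCNF_cof_iff {V : Type} {q : V → Option Bool} {α : V → Bool} {F : CNF V}
    (hc : compatible q α) : satCNF α (cofCNF q F) ↔ satCNF α F := by
  constructor
  · intro h C hC
    by_cases hp : pSatClause q C
    · obtain ⟨l, hl, hqv⟩ := hp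
      exact ⟨l, hl, hc l.1 l.2 hqv⟩
    · have hmem : cofClause q C ∈ cofCNF q F :=
        Finset.mem_image.2 ⟨C, Finset.mem_filter.2 ⟨hC, hp⟩, rfl⟩
      exact satClause_of_cof (h _ hmem)
  · intro h E hE
    obtain ⟨D, hD, rfl⟩ := Finset.mem_image.1 hE
    exact satClause_cof hc (h D (Finset.mem_filter.1 hD).1)

lemma satCNF_ovr {V : Type} {q : V → Option Bool} {α : V → Bool} {F : CNF V}
    (h : satCNF α (cofCNF q F)) : satCNF (ovr q α) (cofCNF q F) := by
  intro E hE
  obtain ⟨l, hl, hs⟩ := h E hE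
  obtain ⟨D, hD, hED⟩ := Finset.mem_image.1 hE
  subst hED
  have hql : q l.1 ≠ some (!l.2) := (Finset.mem_filter.1 hl).2
  refine ⟨l, hl, ?_⟩
  cases hqv : q l.1 with
  | none => simpa [ovr, hqv] using hs
  | some c =>
    have hc : c = l.2 := by
      rw [hqv] at hql
      cases c <;> cases hl2 : l.2 <;> simp_all
    simp [ovr, hqv, hc]

lemma satisfiable_cof_iff {V : Type} {q : V → Option Bool} {F : CNF V} :
    satisfiable (cofCNF q F) ↔ ∃ α, compatible q α ∧ satCNF α F := by
  constructor
  · rintro ⟨α, h⟩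
    exact ⟨ovr q α, compatible_ovr q α,
      (satCNF_cof_iff (compatible_ovr q α)).1 (satCNF_ovr h)⟩
  · rintro ⟨α, hc, h⟩
    exact ⟨α, (satCNF_cof_iff hc).2 h⟩

/-- construction of the certificate clause `K_bct = K' ∨ K''` when the
target clause becomes blocked in the subspace `q`. -/
theorem stmt_2 (V : Type) (X Y : Set V) (hpart : X = Yᶜ)
    (F : CNF V) (Ctrg : Clause V) (hCtrg : Ctrg ∈ F)
    (q : V → Option Bool)
    (hq : ∀ l ∈ Ctrg, q l.1 ≠ some l.2)
    (w : V) (hwX : w ∈ X) (hwq : q w = none)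
    (bw : Bool) (hlw : (w, bw) ∈ Ctrg)
    (hblk : blocked Y (cofCNF q F) (cofClause q Ctrg) w bw)
    (K' : Clause V) (hK' : ∀ (v : V) (b : Bool), (v, b) ∈ K' ↔ q v = some (!b))
    (K'' : Clause V) (hK''w : (w, bw) ∈ K'') (hK''sub : K'' ⊆ Ctrg)
    (hK''res : ∀ D ∈ cofCNF q F,
      ¬ resolvable w (cofClause q Ctrg) D → ¬ resolvable w (cofClause q K'') D) :
    (∀ α : V → Bool, satClause α (cofClause q (K' ∪ K'')) →
        satClause α (cofClause q Ctrg)) ∧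
    esImplies Y (F.erase Ctrg) {K' ∪ K''} := by
  have hwY : w ∉ Y := by rw [hpart] at hwX; exact hwX
  have hwCq : (w, bw) ∈ cofClause q Ctrg :=
    Finset.mem_filter.2 ⟨hlw, by simp [hwq]⟩
  constructor
  · -- Part 1
    intro α h
    obtain ⟨l, hl, hs⟩ := h
    have hl' := Finset.mem_filter.1 hl
    have hlK : l ∈ K'' := by
      rcases Finset.mem_union.1 hl'.1 with h1 | h2
      · exact absurd ((hK' l.1 l.2).1 (by simpa using h1)) hl'.2
      · exact h2
    exact ⟨l, Finset.mem_filter.2 ⟨hK''sub hlK, hl'.2⟩, hs⟩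
  · -- Part 2
    intro y
    constructor
    · rintro h
      obtain ⟨α, hc, hs⟩ := satisfiable_cof_iff.1 h
      exact satisfiable_cof_iff.2 ⟨α, hc, fun C hC => hs C (Finset.mem_union_left _ hC)⟩
    · intro hsat
      obtain ⟨α', hcy, hF'⟩ := satisfiable_cof_iff.1 hsat
      by_cases hK : satClause α' (K' ∪ K'')
      · refine satisfiable_cof_iff.2 ⟨α', hcy, ?_⟩
        intro C hC
        rcases Finset.mem_union.1 hC with h1 | h2
        · exact hF' C h1
        · rwa [Finset.mem_singleton.1 h2]
      · -- main case
        have hfal : ∀ l ∈ K' ∪ K'', α' l.1 = !l.2 := by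
          intro l hl
          have hne : α' l.1 ≠ l.2 := fun hs => hK ⟨l, hl, hs⟩
          cases h2 : α' l.1 <;> cases h3 : l.2 <;> simp_all
        have hcq : compatible q α' := by
          intro v c h
          have hmem : (v, !c) ∈ K' := (hK' v (!c)).2 (by simpa using h)
          have := hfal _ (Finset.mem_union_left _ hmem)
          simpa using this
        have hwα : α' w = !bw := by
          have := hfal (w, bw) (Finset.mem_union_right _ hK''w)
          simpa using this
        -- α' satisfies every clause of cofCNF q F not containing (w,bw)
        have hαE : ∀ E ∈ cofCNF q F, (w, bw) ∉ E → satClause α' E := by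
          intro E hE hw
          obtain ⟨D, hD, rfl⟩ := Finset.mem_image.1 hE
          have hD' := Finset.mem_filter.1 hD
          have hDne : D ≠ Ctrg := by rintro rfl; exact hw hwCq
          exact satClause_cof hcq (hF' D (Finset.mem_erase.2 ⟨hDne, hD'.1⟩))
        have hpq1 : ∀ E : Clause V, pSatClause (singleAsn w bw) E ↔ (w, bw) ∈ E := by
          intro E
          constructor
          · rintro ⟨⟨v, b⟩, hl, hqv⟩
            simp only [singleAsn] at hqv
            by_cases hv : v = w
            · rw [if_pos hv, Option.some.injEq] at hqv
              rw [← hv, hqv]; exact hl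
            · rw [if_neg hv] at hqv; exact absurd hqv (by simp)
          · intro h
            exact ⟨(w, bw), h, by simp [singleAsn]⟩
        -- α' satisfies the cofactored "unresolvable" part
        have hsat1 : satCNF α' (cofCNF (singleAsn w bw)
            ((cofCNF q F) \ (cofCNF q F).filter fun D =>
              resolvable w (cofClause q Ctrg) D)) := by
          intro E' hE'
          obtain ⟨E, hE, rfl⟩ := Finset.mem_image.1 hE'
          have hE2 := Finset.mem_filter.1 hE
          have hEH := Finset.mem_sdiff.1 hE2.1
          have hEFq := hEH.1
          have hnotres : ¬ resolvable w (cofClause q Ctrg) E :=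
            fun hr => hEH.2 (Finset.mem_filter.2 ⟨hEFq, hr⟩)
          have hwE : (w, bw) ∉ E := fun h => hE2.2 ((hpq1 E).2 h)
          obtain ⟨⟨v0, b0⟩, hl, hs⟩ := hαE E hEFq hwE
          by_cases hvw : v0 = w
          · have hb0 : b0 = !bw := by
              have hs' : α' v0 = b0 := hs
              rw [hvw, hwα] at hs'; exact hs'.symm
            rw [hvw, hb0] at hl
            have hKq : (w, bw) ∈ cofClause q K'' :=
              Finset.mem_filter.2 ⟨hK''w, by simp [hwq]⟩
            have hnr := hK''res E hEFq hnotres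
            have hnB : ¬ ∀ (v : V) (b : Bool), v ≠ w →
                ¬ ((v, b) ∈ cofClause q K'' ∧ (v, !b) ∈ E) :=
              fun hB => hnr ⟨⟨bw, hKq, hl⟩, hB⟩
            push_neg at hnB
            obtain ⟨v, b, hvw', hvK, hvE⟩ := hnB
            have hvK'' : (v, b) ∈ K'' := (Finset.mem_filter.1 hvK).1
            have hαv := hfal (v, b) (Finset.mem_union_right _ hvK'')
            refine ⟨(v, !b), Finset.mem_filter.2 ⟨hvE, ?_⟩, ?_⟩
            · simp [singleAsn, hvw']
            · simpa using hαv
          · exact ⟨(v0, b0), Finset.mem_filter.2 ⟨hl, by simp [singleAsn, hvw]⟩, hs⟩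
        have hcαα : compatible (restrict Y α') α' := by
          intro v c h
          simp only [restrict] at h
          by_cases hv : v ∈ Y <;> simp_all
        have h1 : satisfiable (cofCNF (restrict Y α') (cofCNF (singleAsn w bw)
            ((cofCNF q F) \ (cofCNF q F).filter fun D =>
              resolvable w (cofClause q Ctrg) D))) :=
          satisfiable_cof_iff.2 ⟨α', hcαα, hsat1⟩
        have h2 := (hblk.2.2 α').mpr h1
        obtain ⟨β1, hβ1c, hβ1⟩ := satisfiable_cof_iff.1 h2
        have hβ1' : satCNF β1 (cofCNF (singleAsn w bw) (cofCNF q F)) := by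
          intro E hE
          apply hβ1
          obtain ⟨D, hD, rfl⟩ := Finset.mem_image.1 hE
          have hD' := Finset.mem_filter.1 hD
          by_cases hr : resolvable w (cofClause q Ctrg) D
          · exact Finset.mem_union_right _ (Finset.mem_image.2
              ⟨D, Finset.mem_filter.2 ⟨Finset.mem_filter.2 ⟨hD'.1, hr⟩, hD'.2⟩, rfl⟩)
          · exact Finset.mem_union_left _ (Finset.mem_image.2
              ⟨D, Finset.mem_filter.2 ⟨Finset.mem_sdiff.2
                ⟨hD'.1, fun h => hr (Finset.mem_filter.1 h).2⟩, hD'.2⟩, rfl⟩)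
        have hβ2F : satCNF (ovr (singleAsn w bw) β1) (cofCNF q F) :=
          (satCNF_cof_iff (compatible_ovr _ β1)).1 (satCNF_ovr hβ1')
        set β2 : V → Bool := ovr (singleAsn w bw) β1 with hβ2def
        set β : V → Bool := ovr q β2 with hβdef
        have hβF : satCNF β F :=
          (satCNF_cof_iff (compatible_ovr q β2)).1 (satCNF_ovr hβ2F)
        have hβ2w : β2 w = bw := by simp [hβ2def, ovr, singleAsn]
        have hβw : β w = bw := by simp [hβdef, ovr, hwq, hβ2w]
        have hcomp : compatible (restrict Y y) β := by
          intro v c h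
          simp only [restrict] at h
          by_cases hv : v ∈ Y
          · simp only [hv, if_pos, Option.some.injEq] at h
            have hv' : v ≠ w := fun hvw => hwY (hvw ▸ hv)
            have hα'v : α' v = y v := hcy v (y v) (by simp [restrict, hv])
            cases hqv : q v with
            | some c' =>
              have h1 : α' v = c' := hcq v c' hqv
              have : β v = c' := by simp [hβdef, ovr, hqv]
              rw [this, ← h1, hα'v, ← h]
            | none =>
              have hβ1v : β1 v = α' v := hβ1c v (α' v) (by simp [restrict, hv])
              have : β v = β1 v := by
                simp [hβdef, hβ2def, ovr, hqv, singleAsn, hv']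
              rw [this, hβ1v, hα'v, ← h]
          · simp [hv] at h
        refine satisfiable_cof_iff.2 ⟨β, hcomp, ?_⟩
        intro C hC
        rcases Finset.mem_union.1 hC with h1 | h2
        · exact hβF C (Finset.mem_of_mem_erase h1)
        · rw [Finset.mem_singleton.1 h2]
          exact ⟨(w, bw), Finset.mem_union_right _ hK''w, hβw⟩
end
end

section
/- Let F₁ and F₂ be CNF formulas over V and let F₁* be a CNF formula whose clauses contain only variables of Y. Suppose (i) every full assignment that satisfies F₁ ∧ F₂ satisfies F₁*, and (ii) ∃X[F₁* ∧ F₁ ∧ F₂] ≡ ∃X[F₁* ∧ F₂] (i.e., F₁ is redundant after adding F₁*). Then F₁* is a solution to the PQE problem of taking F₁ out of the scope of quantifiers in ∃X[F₁ ∧ F₂], i.e., ∃X[F₁ ∧ F₂] ≡ F₁* ∧ ∃X[F₂]. -/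
open scoped Classical

noncomputable section

theorem cof_sat_iff {V : Type} (q : V → Option Bool) (F : CNF V) :
    satisfiable (cofCNF q F) ↔
      ∃ α : V → Bool, (∀ v b, q v = some b → α v = b) ∧ satCNF α F := by
  constructor
  · rintro ⟨β, hβ⟩
    refine ⟨fun v => (q v).getD (β v), ?_, ?_⟩
    · intro v b h; simp [h]
    · intro C hC
      by_cases hs : pSatClause q C
      · obtain ⟨l, hl, hq⟩ := hs
        exact ⟨l, hl, by simp [hq]⟩
      · have hmem : cofClause q C ∈ cofCNF q F := by
          apply Finset.mem_image_of_mem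
          simp [Finset.mem_filter, hC, hs]
        obtain ⟨l, hl, hβl⟩ := hβ _ hmem
        have hl' : l ∈ C ∧ q l.1 ≠ some (!l.2) := by
          simpa [cofClause, Finset.mem_filter] using hl
        have hnone : q l.1 = none := by
          cases h : q l.1 with
          | none => rfl
          | some c =>
            exfalso
            have hc : c = l.2 := by
              have h2 := hl'.2; rw [h] at h2
              cases c <;> cases hb : l.2 <;> simp_all
            exact hs ⟨l, hl'.1, by rw [h, hc]⟩
        exact ⟨l, hl'.1, by simp [hnone, hβl]⟩
  · rintro ⟨α, hext, hα⟩
    refine ⟨α, ?_⟩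
    intro C hC
    simp only [cofCNF, Finset.mem_image, Finset.mem_filter] at hC
    obtain ⟨D, ⟨hD, hns⟩, rfl⟩ := hC
    obtain ⟨l, hl, hαl⟩ := hα D hD
    refine ⟨l, ?_, hαl⟩
    simp only [cofClause, Finset.mem_filter]
    refine ⟨hl, ?_⟩
    intro h
    have := hext _ _ h
    rw [hαl] at this
    simp at this

theorem cof_restrict_sat_iff {V : Type} (Y : Set V) (y : V → Bool) (F : CNF V) :
    satisfiable (cofCNF (restrict Y y) F) ↔
      ∃ α : V → Bool, (∀ v ∈ Y, α v = y v) ∧ satCNF α F := by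
  rw [cof_sat_iff]
  constructor
  · rintro ⟨α, h1, h2⟩
    exact ⟨α, fun v hv => h1 v (y v) (by simp [restrict, hv]), h2⟩
  · rintro ⟨α, h1, h2⟩
    refine ⟨α, ?_, h2⟩
    intro v b h
    by_cases hv : v ∈ Y
    · simp [restrict, hv] at h; rw [h1 v hv, h]
    · simp [restrict, hv] at h

theorem satCNF_union {V : Type} (α : V → Bool) (F G : CNF V) :
    satCNF α (F ∪ G) ↔ satCNF α F ∧ satCNF α G := by
  constructor
  · intro h
    exact ⟨fun C hC => h C (Finset.mem_union_left _ hC),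
           fun C hC => h C (Finset.mem_union_right _ hC)⟩
  · rintro ⟨h1, h2⟩ C hC
    rcases Finset.mem_union.mp hC with h | h
    exacts [h1 C h, h2 C h]

/-- if `F₁ ∧ F₂` implies `F₁*` (a formula over `Y`) and `F₁` is redundant
in `∃X[F₁* ∧ F₁ ∧ F₂]`, then `F₁*` solves the PQE problem of taking `F₁` out of the
scope of quantifiers in `∃X[F₁ ∧ F₂]`. -/
theorem stmt_3 (V : Type) (X Y : Set V) (hpart : X = Yᶜ)
    (F₁ F₂ F₁s : CNF V)
    (hYvars : ∀ C ∈ F₁s, ∀ l ∈ C, l.1 ∈ Y)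
    (himp : ∀ α : V → Bool, satCNF α (F₁ ∪ F₂) → satCNF α F₁s)
    (hred : ∀ y : V → Bool,
      satisfiable (cofCNF (restrict Y y) (F₁s ∪ F₁ ∪ F₂)) ↔
        satisfiable (cofCNF (restrict Y y) (F₁s ∪ F₂))) :
    ∀ y : V → Bool,
      satisfiable (cofCNF (restrict Y y) (F₁ ∪ F₂)) ↔
        (satCNF y F₁s ∧ satisfiable (cofCNF (restrict Y y) F₂)) := by
  intro y
  have key : ∀ (α : V → Bool), (∀ v ∈ Y, α v = y v) →
      (satCNF α F₁s ↔ satCNF y F₁s) := by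
    intro α hagree
    constructor <;> intro h C hC <;> obtain ⟨l, hl, hsat⟩ := h C hC <;>
      refine ⟨l, hl, ?_⟩
    · rw [← hagree _ (hYvars C hC l hl)]; exact hsat
    · rw [hagree _ (hYvars C hC l hl)]; exact hsat
  rw [cof_restrict_sat_iff]
  constructor
  · rintro ⟨α, hagree, hsat⟩
    have hF₁s := himp α hsat
    refine ⟨(key α hagree).mp hF₁s, ?_⟩
    rw [cof_restrict_sat_iff]
    exact ⟨α, hagree, (satCNF_union α F₁ F₂).mp hsat |>.2⟩
  · rintro ⟨hy, hsat2⟩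
    rw [cof_restrict_sat_iff] at hsat2
    obtain ⟨α, hagree, hα⟩ := hsat2
    have h1 : satisfiable (cofCNF (restrict Y y) (F₁s ∪ F₂)) := by
      rw [cof_restrict_sat_iff]
      exact ⟨α, hagree, (satCNF_union α F₁s F₂).mpr ⟨(key α hagree).mpr hy, hα⟩⟩
    have h2 := (hred y).mpr h1
    rw [cof_restrict_sat_iff] at h2
    obtain ⟨β, hβagree, hβ⟩ := h2
    rw [satCNF_union, satCNF_union] at hβ
    exact ⟨β, hβagree, (satCNF_union β F₁ F₂).mpr ⟨hβ.1.2, hβ.2⟩⟩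
end
end

section
/- Let the variable set V be partitioned into sets X, Y, Z. Let A be a CNF formula whose clauses contain only variables of X ∪ Y, and B a CNF formula whose clauses contain only variables of Y ∪ Z. Suppose A ∧ B is unsatisfiable. Let W = X ∪ Z and let A* be a CNF formula whose clauses contain only variables of Y such that A* is a solution to the PQE problem of taking A out of the scope of quantifiers in ∃W[A ∧ B], i.e., ∃W[A ∧ B] ≡ A* ∧ ∃W[B]. Then A* ∧ B is unsatisfiable (and hence A ∧ B and A* ∧ B are logically equivalent, both being unsatisfiable). -/
open scoped Classical

noncomputable section

lemma sat_cof_of_sat {V : Type} (Y : Set V) (α : V → Bool) (F : CNF V)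
    (h : satCNF α F) : satisfiable (cofCNF (restrict Y α) F) := by
  refine ⟨α, fun C hC => ?_⟩
  simp only [cofCNF, Finset.mem_image, Finset.mem_filter] at hC
  obtain ⟨D, ⟨hD, hns⟩, rfl⟩ := hC
  obtain ⟨l, hl, hsat⟩ := h D hD
  refine ⟨l, ?_, hsat⟩
  simp only [cofClause, Finset.mem_filter]
  refine ⟨hl, ?_⟩
  intro hc
  simp only [restrict] at hc
  split_ifs at hc with hY
  have := Option.some.inj hc; rw [hsat] at this; simp at this

lemma sat_of_cof_sat {V : Type} (Y : Set V) (y : V → Bool) (F : CNF V)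
    (h : satisfiable (cofCNF (restrict Y y) F)) : satisfiable F := by
  obtain ⟨β, hβ⟩ := h
  refine ⟨fun v => if v ∈ Y then y v else β v, fun C hC => ?_⟩
  by_cases hp : pSatClause (restrict Y y) C
  · obtain ⟨l, hl, hsat⟩ := hp
    simp only [restrict] at hsat
    split_ifs at hsat with hY
    exact ⟨l, hl, by simp [hY, Option.some.inj hsat]⟩
  · have hmem : cofClause (restrict Y y) C ∈ cofCNF (restrict Y y) F := by
      simp only [cofCNF, Finset.mem_image, Finset.mem_filter]
      exact ⟨C, ⟨hC, hp⟩, rfl⟩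
    obtain ⟨l, hl, hsat⟩ := hβ _ hmem
    simp only [cofClause, Finset.mem_filter] at hl
    obtain ⟨hlC, hnf⟩ := hl
    refine ⟨l, hlC, ?_⟩
    by_cases hY : l.1 ∈ Y
    · simp only [hY, if_pos]
      simp only [restrict, hY, if_pos] at hnf
      by_contra hne
      exact hnf (by cases l.2 <;> simp_all)
    · simpa [hY] using hsat

/-- let `V = X ∪ Y ∪ Z` be a partition, `A` over `X ∪ Y`, `B` over
`Y ∪ Z`, `A ∧ B` unsatisfiable, and let `A*` (over `Y`) solve the PQE problem of taking
`A` out of `∃W[A ∧ B]` where `W = X ∪ Z`. Then `A* ∧ B` is unsatisfiable, and hence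
`A ∧ B` and `A* ∧ B` are logically equivalent. -/
theorem stmt_7 (V : Type) (X Y Z : Set V)
    (hXY : Disjoint X Y) (hXZ : Disjoint X Z) (hYZ : Disjoint Y Z)
    (hcover : X ∪ Y ∪ Z = Set.univ)
    (A B As : CNF V)
    (hA : ∀ C ∈ A, ∀ l ∈ C, l.1 ∈ X ∪ Y)
    (hB : ∀ C ∈ B, ∀ l ∈ C, l.1 ∈ Y ∪ Z)
    (hunsat : ¬ satisfiable (A ∪ B))
    (hAsY : ∀ C ∈ As, ∀ l ∈ C, l.1 ∈ Y)
    (hsol : ∀ y : V → Bool,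
      satisfiable (cofCNF (restrict Y y) (A ∪ B)) ↔
        (satCNF y As ∧ satisfiable (cofCNF (restrict Y y) B))) :
    ¬ satisfiable (As ∪ B) ∧
    (∀ α : V → Bool, satCNF α (A ∪ B) ↔ satCNF α (As ∪ B)) := by
  have hmain : ¬ satisfiable (As ∪ B) := by
    rintro ⟨α, hα⟩
    have hAs : satCNF α As := fun C hC => hα C (Finset.mem_union_left _ hC)
    have hBsat : satCNF α B := fun C hC => hα C (Finset.mem_union_right _ hC)
    have h2 : satisfiable (cofCNF (restrict Y α) B) := sat_cof_of_sat Y α B hBsat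
    have h3 : satisfiable (cofCNF (restrict Y α) (A ∪ B)) := (hsol α).mpr ⟨hAs, h2⟩
    exact hunsat (sat_of_cof_sat Y α (A ∪ B) h3)
  refine ⟨hmain, fun α => ⟨fun h => absurd ⟨α, h⟩ hunsat, fun h => absurd ⟨α, h⟩ hmain⟩⟩
end
end

section
/- Let F be a CNF formula over a set X of variables, let x be a full assignment to X, and let H be the set of clauses of F falsified by x. Let q be an assignment to a subset of X that agrees with x on every variable it assigns (q ⊆ x). If F|_q and (F \ H)|_q are equisatisfiable (i.e., H is redundant in ∃X[F] in the subspace q), then F is satisfiable. -/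
open scoped Classical

noncomputable section

/-- all variables quantified. Let `x` be a full assignment, `H` the
clauses of `F` falsified by `x`, and `q ⊆ x` a partial assignment. If `F|_q` and
`(F \ H)|_q` are equisatisfiable (`H` is redundant in `∃X[F]` in the subspace `q`),
then `F` is satisfiable. -/
theorem stmt_10 (V : Type) (F : CNF V) (x : V → Bool) (q : V → Option Bool)
    (hqx : ∀ (v : V) (b : Bool), q v = some b → x v = b)
    (hred : satisfiable (cofCNF q F) ↔
        satisfiable (cofCNF q (F \ F.filter fun C => ¬ satClause x C))) :
    satisfiable F := by
  -- x satisfies (F \ H)|_q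
  have h1 : satisfiable (cofCNF q (F \ F.filter fun C => ¬ satClause x C)) := by
    refine ⟨x, ?_⟩
    intro C hC
    simp only [cofCNF, Finset.mem_image, Finset.mem_filter, Finset.mem_sdiff] at hC
    obtain ⟨D, ⟨⟨hDF, hDH⟩, -⟩, rfl⟩ := hC
    have hsat : satClause x D := by
      by_contra h
      exact hDH ⟨hDF, h⟩
    obtain ⟨l, hl, hxl⟩ := hsat
    refine ⟨l, Finset.mem_filter.mpr ⟨hl, ?_⟩, hxl⟩
    intro hq
    have := hqx l.1 (!l.2) hq
    rw [hxl] at this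
    exact Bool.not_ne_self l.2 this.symm
  -- hence F|_q satisfiable
  obtain ⟨α, hα⟩ := hred.mpr h1
  -- extend q by α
  refine ⟨fun v => (q v).getD (α v), ?_⟩
  intro C hC
  by_cases hps : pSatClause q C
  · obtain ⟨l, hl, hql⟩ := hps
    exact ⟨l, hl, by simp [hql]⟩
  · have hmem : cofClause q C ∈ cofCNF q F := by
      simp only [cofCNF, Finset.mem_image]
      exact ⟨C, Finset.mem_filter.mpr ⟨hC, hps⟩, rfl⟩
    obtain ⟨l, hl, hαl⟩ := hα _ hmem
    rw [cofClause, Finset.mem_filter] at hl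
    obtain ⟨hlC, hlq⟩ := hl
    refine ⟨l, hlC, ?_⟩
    cases hq : q l.1 with
    | none => simpa [hq] using hαl
    | some b =>
      have hb : b ≠ l.2 := by
        rintro rfl
        exact hps ⟨l, hlC, hq⟩
      have : b = !l.2 := by
        cases b <;> cases hb' : l.2 <;> simp_all
      simp [hq, this] at hlq
end
end

section
/- Let the variable set V be partitioned into sets X', Y', {z'}, X'', Y'', {z''}, and let π : X' → X'' be a bijection. Let eq be the CNF formula consisting, for each v ∈ X', of the two clauses {(v, false), (π v, true)} and {(v, true), (π v, false)} (so a full assignment α satisfies eq iff α v = α (π v) for all v ∈ X'). Let G' be a CNF formula whose clauses contain only variables of X' ∪ Y' ∪ {z'}, and G'' a CNF formula whose clauses contain only variables of X'' ∪ Y'' ∪ {z''}. Let W = V \ {z', z''} and let h be a CNF formula whose clauses contain only the variables z', z'' such that ∃W[eq ∧ G' ∧ G''] ≡ h ∧ ∃W[G' ∧ G'']. Suppose every assignment to {z', z''} satisfying h assigns z' and z'' the same value. Then the circuits specified by G' and G'' are equivalent: for every full assignment α that satisfies G' ∧ G'' and satisfies α v = α (π v) for all v ∈ X', it holds that α z'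 = α z''. -/
open scoped Classical

noncomputable section

/-- equivalence checking by PQE. The variables are partitioned into
`X', Y', {z'}, X'', Y'', {z''}`; `eq` states that corresponding inputs are equal;
`G'`, `G''` specify the two circuits; `h` (over `{z', z''}`) is obtained by taking
`eq` out of `∃W[eq ∧ G' ∧ G'']` with `W = V \ {z', z''}`. If every assignment
satisfying `h` gives `z'` and `z''` the same value, the circuits are equivalent. -/
theorem stmt_11 (V : Type)
    (X1 Y1 X2 Y2 : Set V) (z1 z2 : V)
    (hX1Y1 : Disjoint X1 Y1) (hX1X2 : Disjoint X1 X2) (hX1Y2 : Disjoint X1 Y2)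
    (hY1X2 : Disjoint Y1 X2) (hY1Y2 : Disjoint Y1 Y2) (hX2Y2 : Disjoint X2 Y2)
    (hz1 : z1 ∉ X1 ∪ Y1 ∪ X2 ∪ Y2) (hz2 : z2 ∉ X1 ∪ Y1 ∪ X2 ∪ Y2) (hzz : z1 ≠ z2)
    (hcover : X1 ∪ Y1 ∪ X2 ∪ Y2 ∪ {z1, z2} = Set.univ)
    (π : V → V) (hπ : Set.BijOn π X1 X2)
    (eqF : CNF V)
    (heq : ∀ C : Clause V, C ∈ eqF ↔
      ∃ v ∈ X1, C = ({(v, false), (π v, true)} : Finset (V × Bool)) ∨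
                C = ({(v, true), (π v, false)} : Finset (V × Bool)))
    (G1 G2 : CNF V)
    (hG1 : ∀ C ∈ G1, ∀ l ∈ C, l.1 ∈ X1 ∪ Y1 ∪ {z1})
    (hG2 : ∀ C ∈ G2, ∀ l ∈ C, l.1 ∈ X2 ∪ Y2 ∪ {z2})
    (hF : CNF V)
    (hFz : ∀ C ∈ hF, ∀ l ∈ C, l.1 = z1 ∨ l.1 = z2)
    (hsol : ∀ y : V → Bool,
      satisfiable (cofCNF (restrict {z1, z2} y) (eqF ∪ G1 ∪ G2)) ↔
        (satCNF y hF ∧ satisfiable (cofCNF (restrict {z1, z2} y) (G1 ∪ G2))))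
    (hmeet : ∀ y : V → Bool, satCNF y hF → y z1 = y z2) :
    ∀ α : V → Bool, satCNF α (G1 ∪ G2) → (∀ v ∈ X1, α v = α (π v)) →
      α z1 = α z2 := by
  intro α hα hπα
  -- α satisfies eqF ∪ G1 ∪ G2
  have hsat : satCNF α (eqF ∪ G1 ∪ G2) := by
    intro C hC
    rcases Finset.mem_union.1 hC with hC' | hC'
    · rcases Finset.mem_union.1 hC' with hCe | hCg
      · rcases (heq C).1 hCe with ⟨v, hv, hcase⟩
        have hvv := hπα v hv
        rcases hcase with rfl | rfl
        · by_cases hb : α v = false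
          · exact ⟨(v, false), by simp, hb⟩
          · refine ⟨(π v, true), by simp, ?_⟩
            simp only [Bool.not_eq_false] at hb
            simpa [← hvv]
        · by_cases hb : α v = true
          · exact ⟨(v, true), by simp, hb⟩
          · refine ⟨(π v, false), by simp, ?_⟩
            simp only [Bool.not_eq_true] at hb
            simpa [← hvv]
      · exact hα C (Finset.mem_union.2 (Or.inl hCg))
    · exact hα C (Finset.mem_union.2 (Or.inr hC'))
  -- hence α satisfies the cofactor under restrict {z1,z2} α
  have hcof : satisfiable (cofCNF (restrict {z1, z2} α) (eqF ∪ G1 ∪ G2)) := by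
    refine ⟨α, ?_⟩
    intro C hC
    rcases Finset.mem_image.1 hC with ⟨D, hD, rfl⟩
    have hDmem : D ∈ eqF ∪ G1 ∪ G2 := (Finset.mem_filter.1 hD).1
    rcases hsat D hDmem with ⟨l, hl, hlsat⟩
    refine ⟨l, ?_, hlsat⟩
    refine Finset.mem_filter.2 ⟨hl, ?_⟩
    simp only [restrict]
    by_cases hmem : l.1 ∈ ({z1, z2} : Set V)
    · simp only [hmem, if_pos]
      intro hcon
      have : α l.1 = !l.2 := Option.some.inj hcon
      rw [hlsat] at this
      exact (Bool.not_ne_self l.2).symm this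
    · simp [hmem]
  have := ((hsol α).1 hcof).1
  exact hmeet α this
end
end

section
/- Let S be a type of states, I : S → Prop a set of initial states, and T : S → S → Prop a transition relation with the stuttering property: T s s holds for every state s. Fix m ≥ 1. Suppose that for every state s the following equivalence holds (redundancy of the second copy of the initial-state constraint in the m-fold unfolding): there exist states s₀, s₁, …, s_m with I s₀, T sᵢ s_{i+1} for all i < m, and s_m = s, if and only if there exist states s₀, s₁, …, s_m with I s₀, I s₁, T sᵢ s_{i+1} for all i < m, and s_m = s. Then the reachability diameter is at most m: every state reachable from I (in any finite number of transitions) is reachable from I in at most m transitions. -/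
/-- let `I` specify initial states and `T` a stuttering transition
relation. Fix `m ≥ 1`. Suppose that for every state `s`, `s` is reachable from `I` in
`m` transitions iff `s` is reachable in `m` transitions along a path whose first two
states are both initial (redundancy of the second copy of the initial-state constraint
in the `m`-fold unfolding). Then the reachability diameter is at most `m`: every
reachable state is reachable in at most `m` transitions. -/
theorem stmt_12 (S : Type*) (I : S → Prop) (T : S → S → Prop)
    (hstut : ∀ s : S, T s s) (m : ℕ) (hm : 1 ≤ m)
    (hred : ∀ s : S,
      (∃ σ : ℕ → S, I (σ 0) ∧ (∀ i < m, T (σ i) (σ (i + 1))) ∧ σ m = s) ↔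
      (∃ σ : ℕ → S, I (σ 0) ∧ I (σ 1) ∧ (∀ i < m, T (σ i) (σ (i + 1))) ∧ σ m = s)) :
    ∀ s : S,
      (∃ n : ℕ, ∃ σ : ℕ → S, I (σ 0) ∧ (∀ i < n, T (σ i) (σ (i + 1))) ∧ σ n = s) →
      ∃ n ≤ m, ∃ σ : ℕ → S, I (σ 0) ∧ (∀ i < n, T (σ i) (σ (i + 1))) ∧ σ n = s := by
  have pad : ∀ (x : S) (k : ℕ), k ≤ m →
      (∃ σ : ℕ → S, I (σ 0) ∧ (∀ i < k, T (σ i) (σ (i + 1))) ∧ σ k = x) →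
      ∃ σ : ℕ → S, I (σ 0) ∧ (∀ i < m, T (σ i) (σ (i + 1))) ∧ σ m = x := by
    rintro x k hk ⟨σ, h0, hstep, hend⟩
    refine ⟨fun i => σ (min i k), by simpa using h0, ?_, by simp [min_eq_right hk, hend]⟩
    intro i _
    rcases Nat.lt_or_ge i k with h | h
    · have h1 : min i k = i := min_eq_left h.le
      have h2 : min (i + 1) k = i + 1 := min_eq_left (Nat.succ_le_of_lt h)
      simp only [h1, h2]
      exact hstep i h
    · have h1 : min i k = k := min_eq_right h
      have h2 : min (i + 1) k = k := min_eq_right (le_trans h (Nat.le_succ i))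
      simp only [h1, h2]
      exact hstut _
  have key : ∀ n (x : S),
      (∃ σ : ℕ → S, I (σ 0) ∧ (∀ i < n, T (σ i) (σ (i + 1))) ∧ σ n = x) →
      ∃ σ : ℕ → S, I (σ 0) ∧ (∀ i < m, T (σ i) (σ (i + 1))) ∧ σ m = x := by
    intro n
    induction n with
    | zero => exact fun x h => pad x 0 (Nat.zero_le m) h
    | succ n ih =>
      rintro x ⟨σ, h0, hstep, hend⟩
      rcases Nat.lt_or_ge n m with h | h
      · exact pad x (n + 1) h ⟨σ, h0, hstep, hend⟩
      · have hn : ∃ τ : ℕ → S, I (τ 0) ∧ (∀ i < m, T (τ i) (τ (i + 1))) ∧ τ m = σ n :=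
          ih (σ n) ⟨σ, h0, fun i hi => hstep i (Nat.lt_succ_of_lt hi), rfl⟩
        obtain ⟨τ, ht0, ht1, htstep, htend⟩ := (hred (σ n)).1 hn
        refine ⟨fun i => if i < m then τ (i + 1) else x, ?_, ?_, ?_⟩
        · simp only [if_pos (show 0 < m from hm)]; exact ht1
        · intro i hi
          rcases Nat.lt_or_ge (i + 1) m with h2 | h2
          · beta_reduce; rw [if_pos hi, if_pos h2]
            exact htstep (i + 1) h2
          · have hmi : i + 1 = m := le_antisymm hi h2
            beta_reduce; rw [if_pos hi, hmi, if_neg (lt_irrefl m), htend]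
            have := hstep n (Nat.lt_succ_self n)
            rwa [hend] at this
        · simp
  intro s ⟨n, h⟩
  exact ⟨m, le_refl m, key n s h⟩
end
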